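/- arXiv:2403.07212 — 3 statements merged into one kernel-verified Lean document; each statement's English description precedes it below -/
import Mathlib

section
/- Straszewicz's theorem: in a closed convex subset X of ℝ^d, every extreme point of X is the limit of a sequence of exposed points of X. -/
open Set Metric Filter

local notation "⟪" x ", " y "⟫" => @inner ℝ _ _ x y

lemma sum_extend_eq {ι : Type} [Fintype ι] {n : ℕ} (e : ι ↪ Fin n) {M : Type*}
    [AddCommMonoid M] (f : ι → M) :
    ∑ j, Function.extend e f (fun _ => 0) j = ∑ i, f i := by
  classical
  have h1 : ∑ j ∈ Finset.univ.map e, Function.extend e f (fun _ => 0) j = ∑ i, f i := by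
    rw [Finset.sum_map]
    exact Finset.sum_congr rfl fun i _ => e.injective.extend_apply f _ i
  rw [← h1]
  apply (Finset.sum_subset (Finset.subset_univ _) ?_).symm
  intro j _ hj
  apply Function.extend_apply' f _ j
  rintro ⟨i, rfl⟩
  exact hj (Finset.mem_map.2 ⟨i, Finset.mem_univ _, rfl⟩)

/-- The convex hull of a compact set in a Euclidean space is compact. -/
lemma isCompact_convexHull_euclidean {d : ℕ} {S : Set (EuclideanSpace ℝ (Fin d))}
    (hS : IsCompact S) : IsCompact (convexHull ℝ S) := by
  classical
  rcases S.eq_empty_or_nonempty with rfl | ⟨z₀, hz₀⟩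
  · simp
  set n := d + 1 with hn
  set T : Set ((Fin n → ℝ) × (Fin n → EuclideanSpace ℝ (Fin d))) :=
    stdSimplex ℝ (Fin n) ×ˢ (univ : Set (Fin n)).pi fun _ => S with hTdef
  have hT : IsCompact T := (isCompact_stdSimplex _ _).prod (isCompact_univ_pi fun _ => hS)
  set φ : (Fin n → ℝ) × (Fin n → EuclideanSpace ℝ (Fin d)) → EuclideanSpace ℝ (Fin d) :=
    fun p => ∑ i, p.1 i • p.2 i with hφdef
  have hφ : Continuous φ := by
    apply continuous_finset_sum
    intro i _
    exact ((continuous_apply i).comp continuous_fst).smul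
      ((continuous_apply i).comp continuous_snd)
  have himg : φ '' T = convexHull ℝ S := by
    apply Subset.antisymm
    · rintro _ ⟨⟨w, v⟩, ⟨hw, hv⟩, rfl⟩
      exact mem_convexHull_of_exists_fintype w v hw.1 hw.2 (fun i => hv i (mem_univ i)) rfl
    · intro x hx
      obtain ⟨ι, hι, z, w, hrange, hai, hpos, hsum, hx⟩ :=
        eq_pos_convex_span_of_mem_convexHull hx
      letI := hι
      have hcard : Fintype.card ι ≤ n := by
        have h1 := hai.card_le_finrank_succ
        have h2 : Module.finrank ℝ (vectorSpan ℝ (Set.range z)) ≤ d := by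
          have := Submodule.finrank_le (vectorSpan ℝ (Set.range z))
          rwa [finrank_euclideanSpace_fin] at this
        omega
      obtain ⟨e⟩ : Nonempty (ι ↪ Fin n) := by
        apply Function.Embedding.nonempty_of_card_le
        simpa using hcard
      refine ⟨(Function.extend e w (fun _ => 0), Function.extend e z (fun _ => z₀)),
        ⟨⟨?_, ?_⟩, ?_⟩, ?_⟩
      · intro j
        show (0:ℝ) ≤ Function.extend e w (fun _ => 0) j
        rcases em (∃ i, e i = j) with ⟨i, rfl⟩ | hj
        · rw [e.injective.extend_apply]
          exact (hpos i).le
        · rw [Function.extend_apply' w _ j hj]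
      · show ∑ j, Function.extend e w (fun _ => 0) j = 1
        rw [sum_extend_eq]
        exact hsum
      · intro j _
        show Function.extend e z (fun _ => z₀) j ∈ S
        rcases em (∃ i, e i = j) with ⟨i, rfl⟩ | hj
        · rw [e.injective.extend_apply]
          exact hrange (mem_range_self i)
        · rw [Function.extend_apply' z _ j hj]
          exact hz₀
      · show ∑ j, Function.extend e w (fun _ => 0) j • Function.extend e z (fun _ => z₀) j = x
        have hptwise : ∀ j, Function.extend e w (fun _ => 0) j • Function.extend e z (fun _ => z₀) j
            = Function.extend e (fun i => w i • z i) (fun _ => 0) j := by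
          intro j
          rcases em (∃ i, e i = j) with ⟨i, rfl⟩ | hj
          · rw [e.injective.extend_apply, e.injective.extend_apply, e.injective.extend_apply]
          · rw [Function.extend_apply' w _ j hj,
              Function.extend_apply' z _ j hj, Function.extend_apply' _ _ j hj]
            simp
        rw [Finset.sum_congr rfl fun j _ => hptwise j, sum_extend_eq]
        exact hx
  rw [← himg]
  exact hT.image hφ

/-- A farthest point of a set from an external point is an exposed point. -/
lemma farthest_point_exposed {d : ℕ} {K : Set (EuclideanSpace ℝ (Fin d))}
    {p z : EuclideanSpace ℝ (Fin d)} (hz : z ∈ K)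
    (hfar : ∀ x ∈ K, ‖x - p‖ ≤ ‖z - p‖) (hne : z ≠ p) : z ∈ K.exposedPoints ℝ := by
  refine ⟨hz, innerSL ℝ (z - p), fun y hy => ?_⟩
  have ha : (0 : ℝ) < ‖z - p‖ := by rwa [norm_pos_iff, sub_ne_zero]
  have hcs : ⟪z - p, y - p⟫ ≤ ‖z - p‖ * ‖y - p‖ := real_inner_le_norm _ _
  have hyp : ‖y - p‖ ≤ ‖z - p‖ := hfar y hy
  have hzz : ⟪z - p, z - p⟫ = ‖z - p‖ * ‖z - p‖ := real_inner_self_eq_norm_mul_norm _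
  have hsy : ⟪z - p, y - p⟫ = ⟪z - p, y⟫ - ⟪z - p, p⟫ := inner_sub_right _ _ _
  have hsz : ⟪z - p, z - p⟫ = ⟪z - p, z⟫ - ⟪z - p, p⟫ := inner_sub_right _ _ _
  have hmul : ‖z - p‖ * ‖y - p‖ ≤ ‖z - p‖ * ‖z - p‖ :=
    mul_le_mul_of_nonneg_left hyp (norm_nonneg _)
  have hle : (innerSL ℝ (z - p)) y ≤ (innerSL ℝ (z - p)) z := by
    simp only [innerSL_apply_apply]
    linarith
  refine ⟨hle, fun hge => ?_⟩
  simp only [innerSL_apply_apply] at hge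
  -- all inequalities are equalities
  have h1 : ⟪z - p, y - p⟫ = ‖z - p‖ * ‖y - p‖ := by linarith
  have h2 : ‖y - p‖ = ‖z - p‖ := by nlinarith
  have h3 : ‖y - p‖ • (z - p) = ‖z - p‖ • (y - p) := inner_eq_norm_mul_iff_real.1 h1
  rw [h2] at h3
  have h4 : z - p = y - p := smul_right_injective _ (ne_of_gt ha) h3
  exact (sub_left_injective h4).symm

/-- An exposed point of `X ∩ closedBall x₀ r` lying strictly inside the ball is an
exposed point of `X`. -/
lemma exposed_of_exposed_inter_ball {d : ℕ} {X : Set (EuclideanSpace ℝ (Fin d))}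
    (hconv : Convex ℝ X) {x₀ z : EuclideanSpace ℝ (Fin d)} {r : ℝ}
    (hz : z ∈ (X ∩ closedBall x₀ r).exposedPoints ℝ) (hzr : dist z x₀ < r) :
    z ∈ X.exposedPoints ℝ := by
  obtain ⟨⟨hzX, hzB⟩, l, hl⟩ := hz
  refine ⟨hzX, l, fun y hy => ?_⟩
  rcases em (y ∈ closedBall x₀ r) with hyB | hyB
  · exact hl y ⟨hy, hyB⟩
  have hyz : y ≠ z := fun h => hyB (h ▸ hzB)
  have hnorm : (0 : ℝ) < ‖y - z‖ := by
    rwa [norm_pos_iff, sub_ne_zero]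
  set δ : ℝ := r - dist z x₀ with hδdef
  have hδ : 0 < δ := by rw [hδdef]; linarith
  set t : ℝ := min 1 (δ / ‖y - z‖) with htdef
  have ht0 : 0 < t := lt_min one_pos (div_pos hδ hnorm)
  have ht1 : t ≤ 1 := min_le_left _ _
  set w : EuclideanSpace ℝ (Fin d) := z + t • (y - z) with hwdef
  have hwX : w ∈ X := by
    have := hconv hzX hy (by linarith : (0:ℝ) ≤ 1 - t) ht0.le (by ring)
    convert this using 1
    rw [hwdef]
    module
  have hwB : w ∈ closedBall x₀ r := by
    have hdist : dist w x₀ ≤ dist z x₀ + t * ‖y - z‖ := by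
      calc dist w x₀ ≤ dist w z + dist z x₀ := dist_triangle _ _ _
        _ = t * ‖y - z‖ + dist z x₀ := by
            rw [hwdef, dist_eq_norm]
            simp [norm_smul, abs_of_pos ht0]
        _ = dist z x₀ + t * ‖y - z‖ := by ring
    have htδ : t * ‖y - z‖ ≤ δ := by
      calc t * ‖y - z‖ ≤ (δ / ‖y - z‖) * ‖y - z‖ :=
            mul_le_mul_of_nonneg_right (min_le_right _ _) (norm_nonneg _)
        _ = δ := div_mul_cancel₀ _ (ne_of_gt hnorm)
    rw [mem_closedBall]
    linarith
  obtain ⟨hwle, hweq⟩ := hl w ⟨hwX, hwB⟩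
  have hlw : l w = l z + t * (l y - l z) := by
    rw [hwdef]
    simp only [map_add, map_smul, map_sub, smul_eq_mul]
  constructor
  · by_contra hlt
    push_neg at hlt
    rw [hlw] at hwle
    nlinarith
  · intro hge
    have hzw : l z ≤ l w := by rw [hlw]; nlinarith
    have hwz : w = z := hweq hzw
    rw [hwdef] at hwz
    have hts : t • (y - z) = 0 := by
      have := add_eq_left.mp hwz
      exact this
    rcases smul_eq_zero.1 hts with h | h
    · exact absurd h (ne_of_gt ht0)
    · exact absurd (sub_eq_zero.1 h) hyz

/-- Straszewicz's theorem: in a closed convex set, every extreme point is a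
limit of exposed points. -/
theorem straszewicz {d : ℕ}
    (X : Set (EuclideanSpace ℝ (Fin d))) (hclosed : IsClosed X)
    (hconv : Convex ℝ X) (x₀ : EuclideanSpace ℝ (Fin d))
    (hx₀ : x₀ ∈ X.extremePoints ℝ) :
    ∃ f : ℕ → EuclideanSpace ℝ (Fin d),
      (∀ k, f k ∈ X.exposedPoints ℝ) ∧
        Filter.Tendsto f Filter.atTop (nhds x₀) := by
  classical
  have hx₀X : x₀ ∈ X := hx₀.1
  -- Key step: exposed points arbitrarily close to x₀
  have key : ∀ ε : ℝ, 0 < ε → ∃ z ∈ X.exposedPoints ℝ, dist z x₀ < ε := by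
    intro ε hε
    -- trivial case: X = {x₀}
    rcases em (∃ y ∈ X, y ≠ x₀) with ⟨y₀, hy₀X, hy₀⟩ | hXtriv
    swap
    · push_neg at hXtriv
      refine ⟨x₀, ⟨hx₀X, 0, fun y hy => ?_⟩, by simpa using hε⟩
      exact ⟨le_refl _, fun _ => hXtriv y hy⟩
    set ε' : ℝ := min ε (1/2) with hε'def
    have hε'0 : 0 < ε' := lt_min hε (by norm_num)
    have hε'ε : ε' ≤ ε := min_le_left _ _
    have hε'1 : ε' ≤ 1/2 := min_le_right _ _
    set K : Set (EuclideanSpace ℝ (Fin d)) := X ∩ closedBall x₀ 1 with hKdef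
    have hKcomp : IsCompact K := (isCompact_closedBall x₀ 1).inter_left hclosed
    have hKconv : Convex ℝ K := hconv.inter (convex_closedBall x₀ 1)
    have hx₀K : x₀ ∈ K := ⟨hx₀X, mem_closedBall_self (by norm_num)⟩
    have hx₀extK : x₀ ∈ K.extremePoints ℝ :=
      ⟨hx₀K, fun a ha b hb h => hx₀.2 ha.1 hb.1 h⟩
    have hx₀hull : x₀ ∉ convexHull ℝ (K \ {x₀}) :=
      ((hKconv.mem_extremePoints_iff_mem_diff_convexHull_diff).1 hx₀extK).2
    set S : Set (EuclideanSpace ℝ (Fin d)) := K \ ball x₀ ε' with hSdef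
    have hScomp : IsCompact S := hKcomp.diff isOpen_ball
    have hSsub : S ⊆ K \ {x₀} := fun y hy =>
      ⟨hy.1, fun h => hy.2 (by rw [mem_singleton_iff] at h; rw [h]; exact mem_ball_self hε'0)⟩
    set C : Set (EuclideanSpace ℝ (Fin d)) := convexHull ℝ S with hCdef
    have hCcomp : IsCompact C := isCompact_convexHull_euclidean hScomp
    have hx₀C : x₀ ∉ C := fun h => hx₀hull (convexHull_mono hSsub h)
    -- find a point p, distinct from x₀, such that all points of S are strictly
    -- closer to p than x₀ is
    have hp : ∃ p : EuclideanSpace ℝ (Fin d), p ≠ x₀ ∧ ∀ y ∈ S, ‖y - p‖ < ‖x₀ - p‖ := by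
      rcases S.eq_empty_or_nonempty with hSe | ⟨s₀, hs₀⟩
      · exact ⟨y₀, hy₀, by rw [hSe]; simp⟩
      obtain ⟨f, c, hfC, hcx⟩ :=
        geometric_hahn_banach_closed_point (convex_convexHull ℝ S) hCcomp.isClosed hx₀C
      set v : EuclideanSpace ℝ (Fin d) :=
        (InnerProductSpace.toDual ℝ (EuclideanSpace ℝ (Fin d))).symm f with hvdef
      have hvinner : ∀ x, ⟪v, x⟫ = f x := fun x => InnerProductSpace.toDual_symm_apply
      have hvne : v ≠ 0 := by
        intro h
        have h1 := hfC s₀ (subset_convexHull ℝ S hs₀)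
        have h2 := hvinner s₀
        have h3 := hvinner x₀
        rw [h] at h2 h3
        simp only [inner_zero_left] at h2 h3
        rw [← h2] at h1
        rw [← h3] at hcx
        linarith
      have hvnorm : (0 : ℝ) < ‖v‖ := by rwa [norm_pos_iff]
      set hgap : ℝ := f x₀ - c with hhdef
      have hh : 0 < hgap := by rw [hhdef]; linarith
      set ρ : ℝ := 1 / hgap with hρdef
      have hρ : 0 < ρ := by positivity
      refine ⟨x₀ - ρ • v, ?_, ?_⟩
      · intro heq
        have h0 : ρ • v = 0 := by
          have := sub_eq_self.mp heq
          exact this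
        rcases smul_eq_zero.1 h0 with h' | h'
        · exact absurd h' (ne_of_gt hρ)
        · exact hvne h'
      · intro y hyS
        have hyC : y ∈ C := subset_convexHull ℝ S hyS
        have hyf : f y < c := hfC y hyC
        have hyK : y ∈ K := hyS.1
        have hyb : ‖y - x₀‖ ≤ 1 := by
          have := hyK.2
          rwa [mem_closedBall, dist_eq_norm] at this
        have hinner : ⟪v, y - x₀⟫ < -hgap := by
          rw [inner_sub_right, hvinner, hvinner, hhdef]
          linarith
        have hrw : y - (x₀ - ρ • v) = (y - x₀) + ρ • v := by abel
        have expand : ‖y - (x₀ - ρ • v)‖ ^ 2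
            = ‖y - x₀‖ ^ 2 + 2 * (ρ * ⟪v, y - x₀⟫) + ρ ^ 2 * ‖v‖ ^ 2 := by
          rw [hrw, norm_add_sq_real, real_inner_smul_right, real_inner_comm,
            norm_smul]
          simp [abs_of_pos hρ]
          ring
        have hx₀p : ‖x₀ - (x₀ - ρ • v)‖ ^ 2 = ρ ^ 2 * ‖v‖ ^ 2 := by
          have : x₀ - (x₀ - ρ • v) = ρ • v := by abel
          rw [this, norm_smul]
          simp [abs_of_pos hρ]
          ring
        have hρh : ρ * hgap = 1 := by
          rw [hρdef]
          field_simp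
        have h5 : ρ * ⟪v, y - x₀⟫ < -1 := by
          have := mul_lt_mul_of_pos_left hinner hρ
          nlinarith
        have h6 : ‖y - x₀‖ ^ 2 ≤ 1 := by nlinarith [norm_nonneg (y - x₀)]
        have hlt : ‖y - (x₀ - ρ • v)‖ ^ 2 < ‖x₀ - (x₀ - ρ • v)‖ ^ 2 := by
          rw [expand, hx₀p]
          linarith
        have h1 := norm_nonneg (y - (x₀ - ρ • v))
        have h2 := norm_nonneg (x₀ - (x₀ - ρ • v))
        nlinarith
    obtain ⟨p, hpne, hpfar⟩ := hp
    -- farthest point of K from p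
    obtain ⟨z, hzK, hzmax⟩ := hKcomp.exists_isMaxOn ⟨x₀, hx₀K⟩
      (((continuous_id.sub continuous_const).norm).continuousOn)
    have hzfar : ∀ x ∈ K, ‖x - p‖ ≤ ‖z - p‖ := fun x hx => hzmax hx
    have hx₀far : ‖x₀ - p‖ ≤ ‖z - p‖ := hzfar x₀ hx₀K
    have hx₀p : (0 : ℝ) < ‖x₀ - p‖ := by
      rw [norm_pos_iff, sub_ne_zero]
      exact fun h => hpne h.symm
    have hzp : z ≠ p := by
      intro h
      rw [h, sub_self, norm_zero] at hx₀far
      linarith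
    have hzexpK : z ∈ K.exposedPoints ℝ := farthest_point_exposed hzK hzfar hzp
    have hzball : z ∈ ball x₀ ε' := by
      by_contra hzb
      have hzS : z ∈ S := ⟨hzK, hzb⟩
      have := hpfar z hzS
      linarith [hzfar x₀ hx₀K]
    have hzdist : dist z x₀ < ε' := by rwa [mem_ball] at hzball
    have hz1 : dist z x₀ < 1 := by linarith
    exact ⟨z, exposed_of_exposed_inter_ball hconv hzexpK hz1, lt_of_lt_of_le hzdist hε'ε⟩
  choose g hg1 hg2 using fun k : ℕ => key (1 / ((k : ℝ) + 1)) (by positivity)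
  refine ⟨g, hg1, ?_⟩
  rw [tendsto_iff_dist_tendsto_zero]
  exact squeeze_zero (fun k => dist_nonneg) (fun k => (hg2 k).le)
    tendsto_one_div_add_atTop_nhds_zero_nat
end

section
/- If V ⊆ ℝ^d and r > 0, then the erosion V_r = {x : B_r(x) ⊆ V} satisfies: every point x₀ ∈ ∂(V_r) ∩ V admits an exterior tangent ball of radius r touching from outside V_r; more precisely, for every x₀ ∈ ∂V_r there exists y ∉ V with |y − x₀| ≤ r, hence the complement of V_r contains a ball: there exists z with B_r(z) ∩ V_r = ∅ and x₀ ∈ closure(B_r(z)). -/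
/-- Uniform outer regularity of the erosion `V_r = {x : B_r(x) ⊆ V}` at scale
`r`: each boundary point `x₀` of `V_r` admits a point `y ∉ V` with
`|y - x₀| ≤ r`, and lies on the closure of an open `r`-ball disjoint from
`V_r`. -/
theorem erosion_outer_regular {d : ℕ}
    (V : Set (EuclideanSpace ℝ (Fin d))) (hV : IsOpen V) (r : ℝ) (hr : 0 < r)
    (x₀ : EuclideanSpace ℝ (Fin d))
    (hx₀ : x₀ ∈ frontier {x | Metric.ball x r ⊆ V}) :
    (∃ y, y ∉ V ∧ dist y x₀ ≤ r) ∧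
    ∃ z, Metric.ball z r ∩ {x | Metric.ball x r ⊆ V} = ∅ ∧
      x₀ ∈ closure (Metric.ball z r) := by
  set W : Set (EuclideanSpace ℝ (Fin d)) := {x | Metric.ball x r ⊆ V} with hW
  have hxni : x₀ ∉ interior W := hx₀.2
  -- for each n, find a point outside V at distance < r + 1/(n+1)
  have h : ∀ n : ℕ, ∃ y, y ∉ V ∧ dist y x₀ < r + 1 / (n + 1) := by
    intro n
    have hball : ¬ Metric.ball x₀ (1 / (n + 1)) ⊆ W := by
      intro hsub
      exact hxni (mem_interior_iff_mem_nhds.2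
        (Filter.mem_of_superset (Metric.ball_mem_nhds x₀ (by positivity)) hsub))
    rw [Set.not_subset] at hball
    obtain ⟨x', hx'ball, hx'W⟩ := hball
    have : ¬ Metric.ball x' r ⊆ V := hx'W
    rw [Set.not_subset] at this
    obtain ⟨y, hyball, hyV⟩ := this
    refine ⟨y, hyV, ?_⟩
    calc dist y x₀ ≤ dist y x' + dist x' x₀ := dist_triangle _ _ _
      _ < r + 1 / (n + 1) := by
          have h1 : dist y x' < r := Metric.mem_ball.1 hyball
          have h2 : dist x' x₀ < 1 / (n + 1) := Metric.mem_ball.1 hx'ball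
          linarith
  choose y hyV hyd using h
  have hmem : ∀ n, y n ∈ Metric.closedBall x₀ (r + 1) := by
    intro n
    have h1 : (1 : ℝ) / (n + 1) ≤ 1 := by
      rw [div_le_one (by positivity)]; linarith [Nat.cast_nonneg (α := ℝ) n]
    exact Metric.mem_closedBall.2 (le_trans (le_of_lt (hyd n)) (by linarith))
  obtain ⟨z, _, φ, hφ, hconv⟩ :=
    (isCompact_closedBall x₀ (r + 1)).tendsto_subseq hmem
  have hzV : z ∉ V := by
    have : z ∈ Vᶜ :=
      hV.isClosed_compl.mem_of_tendsto hconv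
        (Filter.Eventually.of_forall fun n => hyV (φ n))
    exact this
  have hzdist : dist z x₀ ≤ r := by
    have hf : Filter.Tendsto (fun k => dist (y (φ k)) x₀) Filter.atTop
        (nhds (dist z x₀)) := hconv.dist tendsto_const_nhds
    have hg : Filter.Tendsto (fun k : ℕ => r + 1 / (k + 1 : ℝ)) Filter.atTop
        (nhds r) := by
      have := tendsto_one_div_add_atTop_nhds_zero_nat (𝕜 := ℝ)
      simpa using tendsto_const_nhds.add this
    refine le_of_tendsto_of_tendsto hf hg (Filter.Eventually.of_forall fun k => ?_)
    have h1 : dist (y (φ k)) x₀ < r + 1 / (φ k + 1) := hyd (φ k)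
    have h2 : (1 : ℝ) / (φ k + 1) ≤ 1 / (k + 1) := by
      apply one_div_le_one_div_of_le (by positivity)
      have hk : k ≤ φ k := hφ.le_apply
      have : (k : ℝ) ≤ φ k := Nat.cast_le.2 hk
      linarith
    simp only [Pi.natCast_def]
    linarith
  refine ⟨⟨z, hzV, hzdist⟩, z, ?_, ?_⟩
  · ext w
    simp only [Set.mem_inter_iff, Set.mem_empty_iff_false, iff_false, not_and]
    intro hwball hwW
    exact hzV (hwW (by rwa [Metric.mem_ball, dist_comm]))
  · rw [closure_ball z hr.ne']
    exact Metric.mem_closedBall.2 (by rwa [dist_comm])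
end

section
/- If B ⊆ ℝ^d is open convex with 0 ∈ B and a > 1, then closure(B) ⊆ aB; consequently for convex K with B_ρ(0) ⊆ K and r > 0 small there is a > 1 with K^r ⊆ a K_r, where K^r = K + B_r and K_r = {x : B_r(x) ⊆ K}. -/
open Pointwise

/-- If `B` is open convex with `0 ∈ B` and `a > 1` then `closure B ⊆ a • B`;
consequently, for a compact convex `K` containing a ball `B_ρ(0)` and
`0 < r < ρ`, there is `a > 1` with `K + B_r ⊆ a • {x : B_r(x) ⊆ K}`. -/
theorem closure_subset_dilation_and_Kr {d : ℕ}
    (B : Set (EuclideanSpace ℝ (Fin d))) (hBopen : IsOpen B)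
    (hBconv : Convex ℝ B) (hB0 : (0 : EuclideanSpace ℝ (Fin d)) ∈ B)
    (K : Set (EuclideanSpace ℝ (Fin d))) (hKcomp : IsCompact K)
    (hKconv : Convex ℝ K) (ρ r : ℝ) (hr : 0 < r) (hrρ : r < ρ)
    (hball : Metric.ball (0 : EuclideanSpace ℝ (Fin d)) ρ ⊆ K) :
    (∀ a : ℝ, 1 < a → closure B ⊆ a • B) ∧
    ∃ a : ℝ, 1 < a ∧
      K + Metric.ball 0 r ⊆ a • {x | Metric.ball x r ⊆ K} := by
  have ρpos : 0 < ρ := hr.trans hrρ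
  constructor
  · intro a ha x hx
    have ha0 : (0:ℝ) < a := by linarith
    have hainv : a⁻¹ < 1 := by
      rw [inv_lt_one_iff₀]; right; exact ha
    have h0 : (0 : EuclideanSpace ℝ (Fin d)) ∈ interior B := by
      rwa [hBopen.interior_eq]
    have hmem : (1 - a⁻¹) • (0 : EuclideanSpace ℝ (Fin d)) + a⁻¹ • x ∈ interior B :=
      hBconv.combo_interior_closure_mem_interior h0 hx (by linarith)
        (inv_pos.2 ha0).le (by ring)
    have hmem' : a⁻¹ • x ∈ B := by
      have := interior_subset hmem
      simpa using this
    exact ⟨a⁻¹ • x, hmem', by show a • a⁻¹ • x = x; rw [smul_inv_smul₀ ha0.ne']⟩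
  · set t : ℝ := r / ρ with ht
    have ht0 : 0 < t := div_pos hr ρpos
    have ht1 : t < 1 := (div_lt_one ρpos).2 hrρ
    have htρ : t * ρ = r := div_mul_cancel₀ r ρpos.ne'
    have hballeq : Metric.ball (0 : EuclideanSpace ℝ (Fin d)) r
        = t • Metric.ball (0 : EuclideanSpace ℝ (Fin d)) ρ := by
      rw [smul_ball ht0.ne', smul_zero, Real.norm_of_nonneg ht0.le, htρ]
    refine ⟨(1 + t) / (1 - t), (one_lt_div (by linarith)).2 (by linarith), ?_⟩
    set a : ℝ := (1 + t) / (1 - t) with hadef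
    -- (1-t) • K ⊆ K_r
    have hKr : (1 - t) • K ⊆ {x | Metric.ball x r ⊆ K} := by
      rintro x ⟨k, hk, rfl⟩ y hy
      have hyx : y - (1 - t) • k ∈ Metric.ball (0 : EuclideanSpace ℝ (Fin d)) r := by
        rw [Metric.mem_ball, dist_zero_right, ← dist_eq_norm]
        exact hy
      rw [hballeq] at hyx
      obtain ⟨z, hz, hzeq⟩ := hyx
      have hzK : z ∈ K := hball hz
      have : y ∈ (1 - t) • K + t • K :=
        ⟨(1 - t) • k, ⟨k, hk, rfl⟩, t • z, ⟨z, hzK, rfl⟩, by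
          show (1 - t) • k + t • z = y
          have hzeq' : t • z = y - (1 - t) • k := hzeq
          rw [hzeq']; abel⟩
      rwa [← hKconv.add_smul (by linarith) ht0.le, sub_add_cancel, one_smul] at this
    -- K + ball 0 r ⊆ (1+t) • K
    have hsub : K + Metric.ball (0 : EuclideanSpace ℝ (Fin d)) r ⊆ (1 + t) • K := by
      rintro w ⟨k, hk, v, hv, rfl⟩
      rw [hballeq] at hv
      obtain ⟨z, hz, rfl⟩ := hv
      have : k + t • z ∈ (1 : ℝ) • K + t • K :=
        ⟨k, by simpa using hk, t • z, ⟨z, hball hz, rfl⟩, rfl⟩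
      rwa [← hKconv.add_smul zero_le_one ht0.le] at this
    intro w hw
    have hw' := hsub hw
    have heq : (1 + t) • K = a • ((1 - t) • K) := by
      rw [smul_smul, hadef, div_mul_cancel₀ _ (by linarith : (1:ℝ) - t ≠ 0)]
    rw [heq] at hw'
    exact Set.smul_set_mono hKr hw'
end
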